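/- arXiv:1402.5649 — 2 statements merged into one kernel-verified Lean document; each statement's English description precedes it below -/
import Mathlib

section
/- Let d ≥ 1, n ≥ 1 and N = 2n − 1. Let f, g : (Fin d → ℤ) → ℂ, let τ : ZMod N → ℤ send the residue with representative m ∈ {0, …, N−1} to m if m ≤ n−1 and to m − N otherwise, let c(i) = g(fun k => τ(i k)) and let q(i) = f(fun k => τ(i k)) if τ(i k) ∈ {0, …, n−1} for all k and q(i) = 0 otherwise, both as tensors on (Fin d → ZMod N). Then for every j : Fin d → ℤ with 0 ≤ j k ≤ n−1 for all k: 𝓕⁻¹(𝓕(c) ∘ 𝓕(q))(ĵ) = Σ_{i : Fin d → Fin n} g(fun k => j k − i k) · f(fun k => (i k : ℤ)), where ∘ denotes the elementwise product of tensors, ĵ is j reduced componentwise modulo N, and 𝓕, 𝓕⁻¹ are the multidimensional discrete Fourier transform and its inverse on tensors indexed by (Fin d → ZMod N). That is, the Fourier-domain algorithm computes the discrete convolution exactly. -/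
open Complex BigOperators

/-- `τ : ZMod N → ℤ` sends the residue with integer representative `m ∈ {0, …, N−1}`
to `m` if `m ≤ n−1`, and to `m − N` otherwise. -/
def tau {N : ℕ} [NeZero N] (n : ℕ) (x : ZMod N) : ℤ :=
  if x.val ≤ n - 1 then (x.val : ℤ) else (x.val : ℤ) - (N : ℤ)

/-- The circulant generating tensor `c(i) = g(fun k => τ(i k))`. -/
noncomputable def circTensor {d N : ℕ} [NeZero N] (n : ℕ)
    (g : (Fin d → ℤ) → ℂ) : (Fin d → ZMod N) → ℂ :=
  fun i => g fun k => tau n (i k)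

open Classical in
/-- The zero-padded tensor: `q(i) = f(fun k => τ(i k))` if `τ(i k) ∈ {0, …, n−1}`
for all `k`, and `q(i) = 0` otherwise. -/
noncomputable def padTensor {d N : ℕ} [NeZero N] (n : ℕ)
    (f : (Fin d → ℤ) → ℂ) : (Fin d → ZMod N) → ℂ :=
  fun i =>
    if ∀ k, 0 ≤ tau (N := N) n (i k) ∧ tau (N := N) n (i k) ≤ (n : ℤ) - 1
    then f fun k => tau n (i k) else 0

/-- Multidimensional discrete Fourier transform on tensors indexed by `Fin d → ZMod N`:
`𝓕(A)(i) = Σ_j exp(−2πI · Σ_k (i_k · j_k)/N) · A(j)`. -/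
noncomputable def mdft {d N : ℕ} [NeZero N]
    (A : (Fin d → ZMod N) → ℂ) : (Fin d → ZMod N) → ℂ :=
  fun i => ∑ j : Fin d → ZMod N,
    Complex.exp ((-2 : ℂ) * Real.pi * Complex.I *
      ∑ k : Fin d, (((i k).val : ℂ) * ((j k).val : ℂ)) / (N : ℂ)) * A j

/-- Inverse multidimensional discrete Fourier transform:
`𝓕⁻¹(A)(i) = N^{−d} · Σ_j exp(2πI · Σ_k (i_k · j_k)/N) · A(j)`. -/
noncomputable def imdft {d N : ℕ} [NeZero N]
    (A : (Fin d → ZMod N) → ℂ) : (Fin d → ZMod N) → ℂ :=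
  fun i => ((N : ℂ) ^ d)⁻¹ *
    ∑ j : Fin d → ZMod N,
      Complex.exp ((2 : ℂ) * Real.pi * Complex.I *
        ∑ k : Fin d, (((i k).val : ℂ) * ((j k).val : ℂ)) / (N : ℂ)) * A j

lemma exp_orth1 {N : ℕ} [NeZero N] (t : ℤ) :
    ∑ x : ZMod N, Complex.exp (2 * Real.pi * Complex.I * ((t : ℂ) * ((x.val : ℕ) : ℂ) / (N : ℂ)))
      = if (t : ZMod N) = 0 then (N : ℂ) else 0 := by
  have hN0 : (N : ℂ) ≠ 0 := Nat.cast_ne_zero.2 (NeZero.ne N)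
  set ζ : ℂ := Complex.exp (2 * Real.pi * Complex.I * t / N) with hζ
  have hterm : ∀ m : ℕ, Complex.exp (2 * Real.pi * Complex.I * ((t : ℂ) * (m : ℂ) / (N : ℂ))) = ζ ^ m := by
    intro m
    rw [hζ, ← Complex.exp_nat_mul]
    ring_nf
  have hre : ∑ x : ZMod N, Complex.exp (2 * Real.pi * Complex.I * ((t : ℂ) * ((x.val : ℕ) : ℂ) / (N : ℂ)))
      = ∑ m ∈ Finset.range N, ζ ^ m := by
    rw [Finset.sum_nbij' (i := fun (x : ZMod N) => x.val) (j := fun (m : ℕ) => (m : ZMod N))]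
    · intro x _; exact Finset.mem_range.2 x.val_lt
    · intro m _; exact Finset.mem_univ _
    · intro x _; simp [ZMod.natCast_val, ZMod.cast_id]
    · intro m hm; exact ZMod.val_cast_of_lt (Finset.mem_range.1 hm)
    · intro x _; exact hterm _
  rw [hre]
  have hζN : ζ ^ N = 1 := by
    rw [hζ, ← Complex.exp_nat_mul]
    have : (N : ℂ) * (2 * Real.pi * Complex.I * t / N) = t * (2 * Real.pi * Complex.I) := by
      field_simp
    rw [this]
    exact Complex.exp_int_mul_two_pi_mul_I t
  by_cases h : (t : ZMod N) = 0
  · obtain ⟨s, hs⟩ := (ZMod.intCast_zmod_eq_zero_iff_dvd t N).1 h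
    have hζ1 : ζ = 1 := by
      rw [hζ, hs]
      have harg : 2 * Real.pi * Complex.I * (((N:ℤ) * s : ℤ) : ℂ) / N = s * (2 * Real.pi * Complex.I) := by
        push_cast
        field_simp
      rw [harg]
      exact Complex.exp_int_mul_two_pi_mul_I s
    simp [h, hζ1]
  · have hζne : ζ ≠ 1 := by
      intro h1
      obtain ⟨k, hk⟩ := Complex.exp_eq_one_iff.1 (hζ ▸ h1)
      apply h
      rw [ZMod.intCast_zmod_eq_zero_iff_dvd]
      refine ⟨k, ?_⟩
      have h2 : (2 : ℂ) * Real.pi * Complex.I ≠ 0 := by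
        simp [Real.pi_ne_zero, Complex.I_ne_zero]
      have hk2 : (2 * Real.pi * Complex.I) * ((t : ℂ) / N) = (2 * Real.pi * Complex.I) * k := by
        linear_combination hk
      have hk3 := mul_left_cancel₀ h2 hk2
      have hk4 := (div_eq_iff hN0).1 hk3
      rw [mul_comm] at hk4
      exact_mod_cast hk4
    rw [geom_sum_eq hζne, hζN, if_neg h]
    simp

lemma exp_orth_multi {N : ℕ} [NeZero N] {d : ℕ} (c : Fin d → ℤ) :
    ∑ m : Fin d → ZMod N, Complex.exp (2 * Real.pi * Complex.I *
        ∑ k : Fin d, (c k : ℂ) * (((m k).val : ℕ) : ℂ) / (N : ℂ))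
      = if ∀ k, ((c k : ZMod N)) = 0 then ((N : ℂ)) ^ d else 0 := by
  have step : ∀ m : Fin d → ZMod N, Complex.exp (2 * Real.pi * Complex.I *
        ∑ k : Fin d, (c k : ℂ) * (((m k).val : ℕ) : ℂ) / (N : ℂ))
      = ∏ k : Fin d, Complex.exp (2 * Real.pi * Complex.I *
          ((c k : ℂ) * (((m k).val : ℕ) : ℂ) / (N : ℂ))) := by
    intro m
    rw [← Complex.exp_sum, Finset.mul_sum]
  simp_rw [step]
  rw [← Fintype.prod_sum (fun k (x : ZMod N) => Complex.exp (2 * Real.pi * Complex.I *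
      ((c k : ℂ) * ((x.val : ℕ) : ℂ) / (N : ℂ))))]
  simp_rw [exp_orth1]
  by_cases h : ∀ k, ((c k : ZMod N)) = 0
  · rw [if_pos h]
    simp [h, Finset.prod_const]
  · rw [if_neg h]
    push_neg at h
    obtain ⟨k, hk⟩ := h
    exact Finset.prod_eq_zero (Finset.mem_univ k) (by simp [hk])

lemma conv_key {d N : ℕ} [NeZero N] (c q : (Fin d → ZMod N) → ℂ)
    (v : Fin d → ZMod N) :
    imdft (fun i => mdft c i * mdft q i) v
      = ∑ b : Fin d → ZMod N, c (fun k => v k - b k) * q b := by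
  classical
  have hNd : ((N : ℂ)) ^ d ≠ 0 := pow_ne_zero _ (Nat.cast_ne_zero.2 (NeZero.ne N))
  have expand : ∀ m : Fin d → ZMod N,
      Complex.exp ((2 : ℂ) * Real.pi * Complex.I *
        ∑ k : Fin d, (((v k).val : ℂ) * (((m k).val : ℕ) : ℂ)) / (N : ℂ)) *
        (mdft c m * mdft q m)
      = ∑ a : Fin d → ZMod N, ∑ b : Fin d → ZMod N,
          Complex.exp (2 * Real.pi * Complex.I *
            ∑ k : Fin d, ((((v k).val : ℤ) - ((a k).val : ℤ) - ((b k).val : ℤ) : ℤ) : ℂ)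
              * (((m k).val : ℕ) : ℂ) / (N : ℂ)) * (c a * q b) := by
    intro m
    unfold mdft
    rw [Finset.sum_mul_sum, Finset.mul_sum]
    refine Finset.sum_congr rfl fun a _ => ?_
    rw [Finset.mul_sum]
    refine Finset.sum_congr rfl fun b _ => ?_
    have : Complex.exp ((2 : ℂ) * Real.pi * Complex.I *
          ∑ k : Fin d, (((v k).val : ℂ) * (((m k).val : ℕ) : ℂ)) / (N : ℂ)) *
        Complex.exp ((-2 : ℂ) * Real.pi * Complex.I *
          ∑ k : Fin d, (((m k).val : ℂ) * (((a k).val : ℕ) : ℂ)) / (N : ℂ)) *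
        Complex.exp ((-2 : ℂ) * Real.pi * Complex.I *
          ∑ k : Fin d, (((m k).val : ℂ) * (((b k).val : ℕ) : ℂ)) / (N : ℂ))
        = Complex.exp (2 * Real.pi * Complex.I *
            ∑ k : Fin d, ((((v k).val : ℤ) - ((a k).val : ℤ) - ((b k).val : ℤ) : ℤ) : ℂ)
              * (((m k).val : ℕ) : ℂ) / (N : ℂ)) := by
      rw [← Complex.exp_add, ← Complex.exp_add]
      congr 1
      rw [Finset.mul_sum, Finset.mul_sum, Finset.mul_sum, Finset.mul_sum,
        ← Finset.sum_add_distrib, ← Finset.sum_add_distrib]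
      refine Finset.sum_congr rfl fun k _ => ?_
      push_cast
      ring
    calc Complex.exp ((2 : ℂ) * Real.pi * Complex.I *
          ∑ k : Fin d, (((v k).val : ℂ) * (((m k).val : ℕ) : ℂ)) / (N : ℂ)) *
          (Complex.exp ((-2 : ℂ) * Real.pi * Complex.I *
            ∑ k : Fin d, (((m k).val : ℂ) * (((a k).val : ℕ) : ℂ)) / (N : ℂ)) * c a *
          (Complex.exp ((-2 : ℂ) * Real.pi * Complex.I *
            ∑ k : Fin d, (((m k).val : ℂ) * (((b k).val : ℕ) : ℂ)) / (N : ℂ)) * q b))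
        = (Complex.exp ((2 : ℂ) * Real.pi * Complex.I *
            ∑ k : Fin d, (((v k).val : ℂ) * (((m k).val : ℕ) : ℂ)) / (N : ℂ)) *
          Complex.exp ((-2 : ℂ) * Real.pi * Complex.I *
            ∑ k : Fin d, (((m k).val : ℂ) * (((a k).val : ℕ) : ℂ)) / (N : ℂ)) *
          Complex.exp ((-2 : ℂ) * Real.pi * Complex.I *
            ∑ k : Fin d, (((m k).val : ℂ) * (((b k).val : ℕ) : ℂ)) / (N : ℂ))) * (c a * q b) := by
            ring
      _ = _ := by rw [this]
  unfold imdft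
  simp only []
  rw [show (∑ m : Fin d → ZMod N,
      Complex.exp ((2 : ℂ) * Real.pi * Complex.I *
        ∑ k : Fin d, (((v k).val : ℂ) * (((m k).val : ℕ) : ℂ)) / (N : ℂ)) *
        (mdft c m * mdft q m))
    = ∑ m : Fin d → ZMod N, ∑ a : Fin d → ZMod N, ∑ b : Fin d → ZMod N,
        Complex.exp (2 * Real.pi * Complex.I *
          ∑ k : Fin d, ((((v k).val : ℤ) - ((a k).val : ℤ) - ((b k).val : ℤ) : ℤ) : ℂ)
            * (((m k).val : ℕ) : ℂ) / (N : ℂ)) * (c a * q b)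
    from Finset.sum_congr rfl fun m _ => expand m]
  rw [Finset.sum_comm]
  have inner : ∀ a : Fin d → ZMod N,
      (∑ m : Fin d → ZMod N, ∑ b : Fin d → ZMod N,
        Complex.exp (2 * Real.pi * Complex.I *
          ∑ k : Fin d, ((((v k).val : ℤ) - ((a k).val : ℤ) - ((b k).val : ℤ) : ℤ) : ℂ)
            * (((m k).val : ℕ) : ℂ) / (N : ℂ)) * (c a * q b))
      = ∑ b : Fin d → ZMod N,
          (if a = (fun k => v k - b k) then ((N:ℂ))^d * (c a * q b) else 0) := by
    intro a
    rw [Finset.sum_comm]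
    refine Finset.sum_congr rfl fun b _ => ?_
    rw [← Finset.sum_mul, exp_orth_multi (fun k => ((v k).val : ℤ) - ((a k).val : ℤ) - ((b k).val : ℤ))]
    have hcond : (∀ k, ((((v k).val : ℤ) - ((a k).val : ℤ) - ((b k).val : ℤ) : ℤ) : ZMod N) = 0)
        ↔ a = (fun k => v k - b k) := by
      constructor
      · intro h
        funext k
        have := h k
        push_cast at this
        simp only [ZMod.natCast_val, ZMod.cast_id] at this
        have : v k - a k - b k = 0 := this
        linear_combination -this
      · intro h k
        push_cast
        simp only [ZMod.natCast_val, ZMod.cast_id]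
        rw [h]
        ring
    by_cases h : a = (fun k => v k - b k)
    · rw [if_pos (hcond.2 h), if_pos h]
    · rw [if_neg (fun hc => h (hcond.1 hc)), if_neg h, zero_mul]
  rw [Finset.sum_congr rfl fun a _ => inner a, Finset.sum_comm]
  rw [Finset.mul_sum]
  refine Finset.sum_congr rfl fun b _ => ?_
  rw [Finset.sum_ite_eq' Finset.univ (fun k => v k - b k)
    (fun a => ((N:ℂ))^d * (c a * q b)), if_pos (Finset.mem_univ _)]
  rw [← mul_assoc, inv_mul_cancel₀ hNd, one_mul]

lemma tau_intCast {N n : ℕ} [NeZero N] (hn : 1 ≤ n) (hN : N = 2 * n - 1) (z : ℤ)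
    (h1 : -(n : ℤ) + 1 ≤ z) (h2 : z ≤ (n : ℤ) - 1) :
    tau (N := N) n ((z : ZMod N)) = z := by
  have hv : (((z : ZMod N)).val : ℤ) = z % N := ZMod.val_intCast z
  have hNz : (N : ℤ) = 2 * (n : ℤ) - 1 := by omega
  by_cases hz : 0 ≤ z
  · have hmod : z % N = z := Int.emod_eq_of_lt hz (by omega)
    rw [hmod] at hv
    unfold tau
    rw [if_pos (by omega)]
    exact hv
  · have hmod : z % N = z + N := by
      have heq : (z + (N : ℤ) * 1) % N = z % N := Int.add_mul_emod_self_left z (N : ℤ) 1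
      rw [mul_one] at heq
      rw [← heq]
      exact Int.emod_eq_of_lt (by omega) (by omega)
    rw [hmod] at hv
    unfold tau
    rw [if_neg (by omega)]
    omega

def iota {d N : ℕ} [NeZero N] (n : ℕ) (i : Fin d → Fin n) : Fin d → ZMod N :=
  fun k => ((i k : ℕ) : ZMod N)

/-- The Fourier-domain algorithm computes the discrete convolution exactly:
with `N = 2n − 1`, for every multi-index `j` with `0 ≤ j k ≤ n − 1`,
`𝓕⁻¹(𝓕(c) ∘ 𝓕(q))(ĵ) = Σ_{i : Fin d → Fin n} g(j − i) · f(i)`,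
where `∘` is the elementwise product and `ĵ` is `j` reduced componentwise mod `N`. -/
theorem fourier_algorithm_computes_conv {d : ℕ} (hd : 1 ≤ d) (n : ℕ) (hn : 1 ≤ n)
    (N : ℕ) (hN : N = 2 * n - 1) [NeZero N]
    (f g : (Fin d → ℤ) → ℂ)
    (j : Fin d → ℤ) (hj : ∀ k, 0 ≤ j k ∧ j k ≤ (n : ℤ) - 1) :
    imdft (fun i => mdft (circTensor (N := N) n g) i * mdft (padTensor (N := N) n f) i)
        (fun k => ((j k : ZMod N)))
      = ∑ i : Fin d → Fin n,
          g (fun k => j k - (i k : ℤ)) * f (fun k => ((i k : ℕ) : ℤ)) := by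
  classical
  rw [conv_key]
  have hnN : n ≤ N := by omega
  have hinj : Function.Injective (iota (d := d) (N := N) n) := by
    intro i i' h
    funext k
    have hk := congrFun h k
    have h1 := ZMod.val_cast_of_lt (lt_of_lt_of_le (i k).2 hnN)
    have h2 := ZMod.val_cast_of_lt (lt_of_lt_of_le (i' k).2 hnN)
    apply Fin.ext
    rw [← h1, ← h2]
    exact congrArg ZMod.val hk
  have himg : (∑ b : Fin d → ZMod N,
        circTensor (N := N) n g (fun k => (fun k => ((j k : ZMod N))) k - b k) *
          padTensor (N := N) n f b)
      = ∑ b ∈ Finset.univ.image (iota (d := d) (N := N) n),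
        circTensor (N := N) n g (fun k => (fun k => ((j k : ZMod N))) k - b k) *
          padTensor (N := N) n f b := by
    refine (Finset.sum_subset (Finset.subset_univ _) ?_).symm
    intro b _ hb
    have hcond : ¬ (∀ k, 0 ≤ tau (N := N) n (b k) ∧ tau (N := N) n (b k) ≤ (n : ℤ) - 1) := by
      intro hc
      apply hb
      have hlt : ∀ k, (b k).val < n := by
        intro k
        by_contra hge
        have h0 := (hc k).1
        unfold tau at h0
        rw [if_neg (by omega)] at h0
        have hvlt := (b k).val_lt
        omega
      refine Finset.mem_image.2 ⟨fun k => ⟨(b k).val, hlt k⟩, Finset.mem_univ _, ?_⟩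
      funext k
      show (((b k).val : ℕ) : ZMod N) = b k
      simp [ZMod.natCast_val, ZMod.cast_id]
    simp only [padTensor]
    rw [if_neg hcond, mul_zero]
  rw [himg, Finset.sum_image (fun i _ i' _ h => hinj h)]
  refine Finset.sum_congr rfl fun i _ => ?_
  have htaui : ∀ k, tau (N := N) n (iota (d := d) (N := N) n i k) = ((i k : ℕ) : ℤ) := by
    intro k
    have hcast : iota (d := d) (N := N) n i k = ((((i k : ℕ) : ℤ)) : ZMod N) := by
      simp [iota]
    rw [hcast, tau_intCast hn hN]
    · have := (i k).2; omega
    · have := (i k).2; omega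
  have hcondi : ∀ k, 0 ≤ tau (N := N) n (iota (d := d) (N := N) n i k) ∧
      tau (N := N) n (iota (d := d) (N := N) n i k) ≤ (n : ℤ) - 1 := by
    intro k
    rw [htaui k]
    have := (i k).2
    constructor <;> omega
  have htauj : ∀ k, tau (N := N) n ((j k : ZMod N) - iota (d := d) (N := N) n i k)
      = j k - ((i k : ℕ) : ℤ) := by
    intro k
    have hcast : (j k : ZMod N) - iota (d := d) (N := N) n i k
        = (((j k - ((i k : ℕ) : ℤ)) : ℤ) : ZMod N) := by
      simp [iota]
    rw [hcast, tau_intCast hn hN]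
    · have := (i k).2; have := hj k; omega
    · have := (i k).2; have := hj k; omega
  simp only [circTensor, padTensor]
  rw [if_pos hcondi]
  congr 1
  · congr 1
    funext k
    exact htauj k
  · congr 1
    funext k
    exact htaui k
end

section
/- Let d ≥ 1, n : Fin d → ℕ with n k > 0, and ranks r, s : Fin (d+1) → ℕ with r 0 = r d = s 0 = s d = 1. Suppose tensors A, B : (Π k : Fin d, ZMod (n k)) → ℂ are in TT format with cores G k and H k respectively. Then the elementwise (Hadamard) product A ∘ B is in TT format with ranks r·s and cores given by the Kronecker products of the original cores: for each k and each index value i, the core of A ∘ B at (k, i) is G k (i) ⊗ H k (i) (Kronecker product of matrices). That is, (A ∘ B)(i) equals the unique entry of the 1×1 matrix product (G 0 (i 0) ⊗ H 0 (i 0)) * ⋯ * (G (d−1) (i (d−1)) ⊗ H (d−1) (i (d−1))). In particular, the TT-ranks of an elementwise product are at most the products of the TT-ranks of the factors. -/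
open Complex BigOperators

/-- Evaluation of a tensor-train representation with ranks `r : Fin (d+1) → ℕ` and
cores `G k : ZMod (n k) → Matrix (Fin (r k)) (Fin (r (k+1))) ℂ`: the (single) entry
of the 1×1 matrix product `G 0 (i 0) * ⋯ * G (d−1) (i (d−1))` (for `r 0 = r d = 1`),
written as the sum over all index paths `α`. -/
noncomputable def ttEval {d : ℕ} (n : Fin d → ℕ) [∀ k, NeZero (n k)]
    (r : Fin (d + 1) → ℕ)
    (G : ∀ k : Fin d, ZMod (n k) → Matrix (Fin (r k.castSucc)) (Fin (r k.succ)) ℂ)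
    (i : ∀ k : Fin d, ZMod (n k)) : ℂ :=
  ∑ α : ∀ k : Fin (d + 1), Fin (r k),
    ∏ k : Fin d, G k (i k) (α k.castSucc) (α k.succ)

/-- Evaluation of a tensor-train representation whose `k`-th rank index set is the
product `Fin (r k) × Fin (s k)` (ranks `r·s`), as arises from Kronecker-product
cores. -/
noncomputable def ttEvalProd {d : ℕ} (n : Fin d → ℕ) [∀ k, NeZero (n k)]
    (r s : Fin (d + 1) → ℕ)
    (K : ∀ k : Fin d, ZMod (n k) →
      Matrix (Fin (r k.castSucc) × Fin (s k.castSucc)) (Fin (r k.succ) × Fin (s k.succ)) ℂ)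
    (i : ∀ k : Fin d, ZMod (n k)) : ℂ :=
  ∑ α : ∀ k : Fin (d + 1), Fin (r k) × Fin (s k),
    ∏ k : Fin d, K k (i k) (α k.castSucc) (α k.succ)

/-- The elementwise (Hadamard) product of two tensors in TT format is in TT format
with ranks `r·s`, the cores being the Kronecker products of the original cores:
`(A ∘ B)(i)` equals the unique entry of the 1×1 matrix product
`(G 0 (i 0) ⊗ H 0 (i 0)) * ⋯ * (G (d−1) (i (d−1)) ⊗ H (d−1) (i (d−1)))`.
In particular the TT-ranks of an elementwise product are at most the products of
the TT-ranks of the factors. -/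
theorem tt_hadamard {d : ℕ} (hd : 1 ≤ d) (n : Fin d → ℕ) [∀ k, NeZero (n k)]
    (r s : Fin (d + 1) → ℕ)
    (hr0 : r 0 = 1) (hrd : r (Fin.last d) = 1)
    (hs0 : s 0 = 1) (hsd : s (Fin.last d) = 1)
    (G : ∀ k : Fin d, ZMod (n k) → Matrix (Fin (r k.castSucc)) (Fin (r k.succ)) ℂ)
    (H : ∀ k : Fin d, ZMod (n k) → Matrix (Fin (s k.castSucc)) (Fin (s k.succ)) ℂ)
    (A B : (∀ k : Fin d, ZMod (n k)) → ℂ)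
    (hA : ∀ i, A i = ttEval n r G i) (hB : ∀ i, B i = ttEval n s H i) :
    ∀ i, A i * B i =
      ttEvalProd n r s
        (fun k x => Matrix.kroneckerMap (· * ·) (G k x) (H k x)) i := by
  intro i
  rw [hA, hB]
  unfold ttEval ttEvalProd
  rw [Finset.sum_mul_sum]
  rw [← Fintype.sum_prod_type']
  refine Fintype.sum_equiv
    (⟨fun p k => (p.1 k, p.2 k), fun γ => (fun k => (γ k).1, fun k => (γ k).2),
      fun p => rfl, fun γ => rfl⟩ :
      (((k : Fin (d + 1)) → Fin (r k)) × ((k : Fin (d + 1)) → Fin (s k))) ≃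
      ((k : Fin (d + 1)) → Fin (r k) × Fin (s k))) _ _ fun p => ?_
  simp [Matrix.kroneckerMap_apply, Finset.prod_mul_distrib]
end
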